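/- (Lemma 4.2) Let M be a partial matrix over a field F and v a partial column on the same rows. If for every completion M̄ of M, no completion v̄ of v lies in the column space of M̄, then mr([v | M]) = mr(M) + 1. -/

import Mathlib

/-!
Adjoining a column raises the rank by at most one, and by exactly one when the new column is
not in the column space. A minimum-rank completion of `M` extended by `v` therefore gives
`mr [v | M] ≤ mr M + 1`; conversely every completion of `[v | M]` is some `[w | N]` with `N` a
completion of `M` and `w ∉ Col N`, so its rank is at least `rank N + 1 ≥ mr M + 1`.
-/

/-- `N` is a completion of the partial matrix `(M, Ω)`: it agrees with `M`
on all known positions `Ω`. -/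
def IsCompletion {F m n : Type*} [Field F] (M : Matrix m n F) (Ω : Set (m × n))
    (N : Matrix m n F) : Prop :=
  ∀ p ∈ Ω, N p.1 p.2 = M p.1 p.2

/-- The minimum rank of the partial matrix `(M, Ω)`: the minimum of the ranks of
its completions. -/
noncomputable def mr {F m n : Type*} [Field F] [Fintype m] [Fintype n]
    (M : Matrix m n F) (Ω : Set (m × n)) : ℕ :=
  sInf {r | ∃ N : Matrix m n F, IsCompletion M Ω N ∧ N.rank = r}

/-- The partial matrix `[u | A]`: the partial column `u` (with known row set `Ωu`)
adjoined as an extra (first) column to `A`. -/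
def augMat {F m n : Type*} [Field F] (u : m → F) (A : Matrix m n F) :
    Matrix m (Unit ⊕ n) F :=
  Matrix.of fun i => Sum.elim (fun _ => u i) (A i)

/-- Known positions of the partial matrix `[u | A]`, inherited from `Ωu` and `ΩA`. -/
def augSet {m n : Type*} (Ωu : Set m) (ΩA : Set (m × n)) : Set (m × (Unit ⊕ n)) :=
  {p | Sum.elim (fun _ => p.1 ∈ Ωu) (fun j => (p.1, j) ∈ ΩA) p.2}

/-- `zero (u, A) = 1`, as a proposition: every completion of `[u | A]` attaining the
minimum rank has zero `u`-column. -/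
def zeroProp {F m n : Type*} [Field F] [Fintype m] [Fintype n]
    (u : m → F) (Ωu : Set m) (A : Matrix m n F) (ΩA : Set (m × n)) : Prop :=
  ∀ N : Matrix m (Unit ⊕ n) F, IsCompletion (augMat u A) (augSet Ωu ΩA) N →
    N.rank = mr (augMat u A) (augSet Ωu ΩA) → ∀ i, N i (Sum.inl ()) = 0

section Span

variable {K V : Type*} [DivisionRing K] [AddCommGroup V] [Module K V] [FiniteDimensional K V]

theorem finrank_span_insert_le (x : V) (s : Set V) :
    Module.finrank K (Submodule.span K (insert x s)) ≤
      Module.finrank K (Submodule.span K s) + 1 := by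
  rw [Submodule.span_insert, add_comm]
  refine (Submodule.finrank_add_le_finrank_add_finrank _ _).trans (Nat.add_le_add_right ?_ _)
  simpa using finrank_span_le_card (R := K) ({x} : Set V)

theorem finrank_span_lt_finrank_span_insert {x : V} {s : Set V} (hx : x ∉ Submodule.span K s) :
    Module.finrank K (Submodule.span K s) < Module.finrank K (Submodule.span K (insert x s)) :=
  Submodule.finrank_lt_finrank_of_lt <| (Submodule.span_mono (Set.subset_insert x s)).lt_of_ne
    fun heq => hx (heq ▸ Submodule.subset_span (Set.mem_insert x s))

end Span

section Augment

variable {F m n : Type*} [Field F]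

theorem augMat_col_inl_submatrix_inr (N : Matrix m (Unit ⊕ n) F) :
    augMat (N.col (Sum.inl ())) (N.submatrix id Sum.inr) = N := by
  ext i (_ | j) <;> rfl

theorem range_col_augMat (u : m → F) (A : Matrix m n F) :
    Set.range (augMat u A).col = insert u (Set.range A.col) := by
  ext x
  constructor
  · rintro ⟨_ | j, rfl⟩
    exacts [Set.mem_insert _ _, Or.inr ⟨j, rfl⟩]
  · rintro (rfl | ⟨j, rfl⟩)
    exacts [⟨Sum.inl (), rfl⟩, ⟨Sum.inr j, rfl⟩]

theorem isCompletion_augMat_iff {u w : m → F} {Ωu : Set m} {A N : Matrix m n F}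
    {ΩA : Set (m × n)} :
    IsCompletion (augMat u A) (augSet Ωu ΩA) (augMat w N) ↔
      (∀ i ∈ Ωu, w i = u i) ∧ IsCompletion A ΩA N :=
  ⟨fun h => ⟨fun i hi => h (i, Sum.inl ()) hi, fun p hp => h (p.1, Sum.inr p.2) hp⟩,
    fun ⟨hw, hN⟩ => fun
      | (i, Sum.inl ()), hi => hw i hi
      | (i, Sum.inr j), hij => hN (i, j) hij⟩

variable [Fintype n]

theorem rank_augMat (u : m → F) (A : Matrix m n F) :
    (augMat u A).rank = Module.finrank F (Submodule.span F (insert u (Set.range A.col))) := by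
  rw [Matrix.rank_eq_finrank_span_cols, range_col_augMat]

variable [Fintype m]

theorem rank_augMat_le (u : m → F) (A : Matrix m n F) : (augMat u A).rank ≤ A.rank + 1 := by
  rw [rank_augMat, Matrix.rank_eq_finrank_span_cols]
  exact finrank_span_insert_le u _

theorem rank_lt_rank_augMat {u : m → F} {A : Matrix m n F}
    (hu : u ∉ Submodule.span F (Set.range A.col)) : A.rank < (augMat u A).rank := by
  rw [rank_augMat, Matrix.rank_eq_finrank_span_cols]
  exact finrank_span_lt_finrank_span_insert hu

end Augment

section MinRank

variable {F m n : Type*} [Field F] [Fintype m] [Fintype n] {M : Matrix m n F} {Ω : Set (m × n)}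

theorem mr_le_rank {N : Matrix m n F} (hN : IsCompletion M Ω N) : mr M Ω ≤ N.rank :=
  Nat.sInf_le ⟨N, hN, rfl⟩

theorem exists_isCompletion_rank_eq_mr (M : Matrix m n F) (Ω : Set (m × n)) :
    ∃ N, IsCompletion M Ω N ∧ N.rank = mr M Ω :=
  Nat.sInf_mem (s := {r | ∃ N, IsCompletion M Ω N ∧ N.rank = r})
    ⟨M.rank, M, fun _ _ => rfl, rfl⟩

theorem le_mr_of_forall_le_rank {r : ℕ} (h : ∀ N, IsCompletion M Ω N → r ≤ N.rank) :
    r ≤ mr M Ω :=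
  let ⟨N, hN, hrank⟩ := exists_isCompletion_rank_eq_mr M Ω
  hrank ▸ h N hN

end MinRank

/-- Lemma 4.2: if for every completion `N` of the partial matrix `M` no completion of
the partial column `v` lies in the column space of `N`, then `mr [v | M] = mr M + 1`. -/
theorem mr_aug_eq_succ_of_not_col_space {F m n : Type*} [Field F] [Fintype m] [Fintype n]
    (M : Matrix m n F) (ΩM : Set (m × n)) (v : m → F) (Ωv : Set m)
    (h : ∀ N : Matrix m n F, IsCompletion M ΩM N →
      ∀ w : m → F, (∀ i ∈ Ωv, w i = v i) →
        w ∉ Submodule.span F (Set.range fun j : n => fun i : m => N i j)) :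
    mr (augMat v M) (augSet Ωv ΩM) = mr M ΩM + 1 := by
  apply le_antisymm
  · obtain ⟨N, hN, hrank⟩ := exists_isCompletion_rank_eq_mr M ΩM
    calc mr (augMat v M) (augSet Ωv ΩM)
        ≤ (augMat v N).rank := mr_le_rank (isCompletion_augMat_iff.2 ⟨fun _ _ => rfl, hN⟩)
      _ ≤ N.rank + 1 := rank_augMat_le v N
      _ = mr M ΩM + 1 := by rw [hrank]
  · refine le_mr_of_forall_le_rank fun N hN => ?_
    obtain ⟨w, N', rfl⟩ : ∃ w N', augMat w N' = N := ⟨_, _, augMat_col_inl_submatrix_inr N⟩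
    obtain ⟨hw, hN'⟩ := isCompletion_augMat_iff.1 hN
    exact (mr_le_rank hN').trans_lt (rank_lt_rank_augMat (h N' hN' w hw))
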